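/- Let W' be a reflection subgroup of W, let i ∈ {1,2}, and let x ∈ Π_i \ Φ_i(W') (a simple root whose reflection r_x does not lie in W'). Then Δ_i(r_x W' r_x) = r_x · Δ_i(W'). -/

import Mathlib

open Pointwise

/-- The positive linear cone of a subset `A` of a real vector space: finite linear
combinations of elements of `A` with all coefficients nonnegative and at least one
strictly positive. -/
def PLC {V : Type*} [AddCommGroup V] [Module ℝ V] (A : Set V) : Set V :=
  { v | ∃ c : V →₀ ℝ, (∀ a, 0 ≤ c a) ∧ ↑c.support ⊆ A ∧ c ≠ 0 ∧
          v = c.sum fun a t => t • a }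

/-- `altEnd a b m` is the alternating product `⋯ a b a b` … of `m` factors,
ending with `b` (e.g. `altEnd a b 3 = b * a * b`). -/
def altEnd {G : Type*} [Monoid G] : G → G → ℕ → G
  | _, _, 0 => 1
  | a, b, m + 1 => altEnd b a m * b

/-- The class of `z` under the equivalence "being nonzero scalar multiples of each
other" (the class `ẑ`). -/
def rayClass {V : Type*} [AddCommGroup V] [Module ℝ V] (z : V) : Set V :=
  { v | ∃ c : ℝ, c ≠ 0 ∧ v = c • z }

/-- The set `Â = {ẑ : z ∈ A}` of scalar-equivalence classes of elements of `A`. -/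
def rayClasses {V : Type*} [AddCommGroup V] [Module ℝ V] (A : Set V) : Set (Set V) :=
  { C | ∃ z ∈ A, C = rayClass z }

/-- A Coxeter datum `(S, V₁, V₂, Π₁, Π₂, ⟨·,·⟩)` satisfying (D1)–(D5), together with
its associated abstract Coxeter group `W` (a group generated by involutions
`r s`, acting faithfully on `V₁` and `V₂` in the prescribed way, with the pairing
`W`-invariant), the decomposition `Φᵢ = Φᵢ⁺ ⊎ Φᵢ⁻` of the paired root systems, the
`W`-equivariant bijection `φ : Φ₁ → Φ₂` (with inverse `phiInv`), and the reflections
`r_x ∈ T` attached to the roots `x ∈ Φ₁` (`refl₁`) resp. `y ∈ Φ₂` (`refl₂`). -/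
structure CoxeterDatum (S : Type*) (V₁ : Type*) (V₂ : Type*) (W : Type*)
    [AddCommGroup V₁] [Module ℝ V₁] [AddCommGroup V₂] [Module ℝ V₂] [Group W] where
  pair : V₁ →ₗ[ℝ] V₂ →ₗ[ℝ] ℝ
  α : S → V₁
  β : S → V₂
  α_inj : Function.Injective α
  β_inj : Function.Injective β
  D1 : ∀ s, pair (α s) (β s) = 1
  D2a : (0 : V₁) ∉ PLC (Set.range α)
  D2b : (0 : V₂) ∉ PLC (Set.range β)
  D2c : ∀ s, α s ∉ PLC (Set.range α \ {α s})
  D2d : ∀ s, β s ∉ PLC (Set.range β \ {β s})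
  D3 : ∀ s t, s ≠ t → pair (α s) (β t) ≤ 0
  D4 : ∀ s t, pair (α s) (β t) = 0 → pair (α t) (β s) = 0
  D5 : ∀ s t, s ≠ t →
    (∃ m : ℕ, 2 ≤ m ∧ pair (α s) (β t) * pair (α t) (β s) = Real.cos (Real.pi / m) ^ 2) ∨
      1 ≤ pair (α s) (β t) * pair (α t) (β s)
  /-- the Coxeter generators `R = {r s : s ∈ S}` of `W` -/
  r : S → W
  r_gen : Subgroup.closure (Set.range r) = ⊤
  r_ne_one : ∀ s, r s ≠ 1
  r_sq : ∀ s, r s * r s = 1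
  /-- the faithful action of `W` on `V₁` -/
  ρ₁ : W →* Module.End ℝ V₁
  /-- the faithful action of `W` on `V₂` -/
  ρ₂ : W →* Module.End ℝ V₂
  ρ₁_inj : Function.Injective ρ₁
  ρ₂_inj : Function.Injective ρ₂
  hr₁ : ∀ s x, ρ₁ (r s) x = x - (2 * pair x (β s)) • α s
  hr₂ : ∀ s y, ρ₂ (r s) y = y - (2 * pair (α s) y) • β s
  pair_inv : ∀ w x y, pair (ρ₁ w x) (ρ₂ w y) = pair x y
  /-- the `W`-equivariant bijection `φ : Φ₁ → Φ₂` -/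
  phi : V₁ → V₂
  /-- the inverse `φ⁻¹ : Φ₂ → Φ₁` -/
  phiInv : V₂ → V₁
  /-- the reflection `r_x` corresponding to a root `x ∈ Φ₁` -/
  refl₁ : V₁ → W
  /-- the reflection `r_y` corresponding to a root `y ∈ Φ₂` -/
  refl₂ : V₂ → W
  decomp₁ : { v | ∃ w s, v = ρ₁ w (α s) } =
      ({ v | ∃ w s, v = ρ₁ w (α s) } ∩ PLC (Set.range α)) ∪
        (-({ v | ∃ w s, v = ρ₁ w (α s) } ∩ PLC (Set.range α)))
  disj₁ : Disjoint ({ v | ∃ w s, v = ρ₁ w (α s) } ∩ PLC (Set.range α))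
      (-({ v | ∃ w s, v = ρ₁ w (α s) } ∩ PLC (Set.range α)))
  decomp₂ : { v | ∃ w s, v = ρ₂ w (β s) } =
      ({ v | ∃ w s, v = ρ₂ w (β s) } ∩ PLC (Set.range β)) ∪
        (-({ v | ∃ w s, v = ρ₂ w (β s) } ∩ PLC (Set.range β)))
  disj₂ : Disjoint ({ v | ∃ w s, v = ρ₂ w (β s) } ∩ PLC (Set.range β))
      (-({ v | ∃ w s, v = ρ₂ w (β s) } ∩ PLC (Set.range β)))
  phi_mem : ∀ x ∈ { v | ∃ w s, v = ρ₁ w (α s) }, phi x ∈ { v | ∃ w s, v = ρ₂ w (β s) }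
  phiInv_mem : ∀ y ∈ { v | ∃ w s, v = ρ₂ w (β s) }, phiInv y ∈ { v | ∃ w s, v = ρ₁ w (α s) }
  phiInv_phi : ∀ x ∈ { v | ∃ w s, v = ρ₁ w (α s) }, phiInv (phi x) = x
  phi_phiInv : ∀ y ∈ { v | ∃ w s, v = ρ₂ w (β s) }, phi (phiInv y) = y
  phi_simple : ∀ s, phi (α s) = β s
  phi_equiv : ∀ w, ∀ x ∈ { v | ∃ w s, v = ρ₁ w (α s) }, phi (ρ₁ w x) = ρ₂ w (phi x)
  refl₁_eq : ∀ w s, refl₁ (ρ₁ w (α s)) = w * r s * w⁻¹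
  refl₂_eq : ∀ w s, refl₂ (ρ₂ w (β s)) = w * r s * w⁻¹
  refl₁_act : ∀ x ∈ { v | ∃ w s, v = ρ₁ w (α s) }, ∀ v,
      ρ₁ (refl₁ x) v = v - (2 * pair v (phi x)) • x
  refl₂_act : ∀ y ∈ { v | ∃ w s, v = ρ₂ w (β s) }, ∀ v,
      ρ₂ (refl₂ y) v = v - (2 * pair (phiInv y) v) • y

namespace CoxeterDatum

variable {S V₁ V₂ W : Type*} [AddCommGroup V₁] [Module ℝ V₁]
  [AddCommGroup V₂] [Module ℝ V₂] [Group W]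

variable (D : CoxeterDatum S V₁ V₂ W)

/-- The root system `Φ₁ = W Π₁`. -/
def Phi₁ : Set V₁ := { v | ∃ w s, v = D.ρ₁ w (D.α s) }

/-- The root system `Φ₂ = W Π₂`. -/
def Phi₂ : Set V₂ := { v | ∃ w s, v = D.ρ₂ w (D.β s) }

/-- The positive roots `Φ₁⁺ = Φ₁ ∩ PLC Π₁`. -/
def PhiPos₁ : Set V₁ := D.Phi₁ ∩ PLC (Set.range D.α)

/-- The positive roots `Φ₂⁺ = Φ₂ ∩ PLC Π₂`. -/
def PhiPos₂ : Set V₂ := D.Phi₂ ∩ PLC (Set.range D.β)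

/-- The negative roots `Φ₁⁻ = -Φ₁⁺`. -/
def PhiNeg₁ : Set V₁ := -D.PhiPos₁

/-- The negative roots `Φ₂⁻ = -Φ₂⁺`. -/
def PhiNeg₂ : Set V₂ := -D.PhiPos₂

/-- The set `T = ⋃_{w ∈ W} w R w⁻¹` of reflections of `W`. -/
def T : Set W := { t | ∃ w s, t = w * D.r s * w⁻¹ }

/-- The length function `ℓ` of `W` with respect to the Coxeter generators `R`. -/
noncomputable def len (w : W) : ℕ :=
  sInf { n | ∃ l : List S, l.length = n ∧ (l.map D.r).prod = w }

/-- `N̄ w = {t ∈ T : ℓ(w t) < ℓ(w)}`. -/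
noncomputable def Nbar (w : W) : Set W :=
  { t | t ∈ D.T ∧ D.len (w * t) < D.len w }

/-- `N₁ w = {ẑ : z ∈ Φ₁⁺, w z ∈ Φ₁⁻}`. -/
def N₁ (w : W) : Set (Set V₁) :=
  { C | ∃ z, z ∈ D.PhiPos₁ ∧ D.ρ₁ w z ∈ D.PhiNeg₁ ∧ C = rayClass z }

/-- `N₂ w = {ẑ : z ∈ Φ₂⁺, w z ∈ Φ₂⁻}`. -/
def N₂ (w : W) : Set (Set V₂) :=
  { C | ∃ z, z ∈ D.PhiPos₂ ∧ D.ρ₂ w z ∈ D.PhiNeg₂ ∧ C = rayClass z }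

/-- A subgroup `W'` of `W` is a reflection subgroup when `W' = ⟨W' ∩ T⟩`. -/
def IsReflectionSubgroup (W' : Subgroup W) : Prop :=
  W' = Subgroup.closure ((W' : Set W) ∩ D.T)

/-- `Φ₁(W') = {x ∈ Φ₁ : r_x ∈ W'}`. -/
def PhiSub₁ (W' : Subgroup W) : Set V₁ :=
  { x | x ∈ D.Phi₁ ∧ D.refl₁ x ∈ W' }

/-- `Φ₂(W') = {y ∈ Φ₂ : r_y ∈ W'}`. -/
def PhiSub₂ (W' : Subgroup W) : Set V₂ :=
  { y | y ∈ D.Phi₂ ∧ D.refl₂ y ∈ W' }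

/-- The canonical generators `S(W') = {t ∈ T : N̄(t) ∩ W' = {t}}`. -/
noncomputable def SW (W' : Subgroup W) : Set W :=
  { t | t ∈ D.T ∧ D.Nbar t ∩ (W' : Set W) = {t} }

/-- `Δ₁(W') = {x ∈ Φ₁⁺ : r_x ∈ S(W')}`. -/
noncomputable def Delta₁ (W' : Subgroup W) : Set V₁ :=
  { x | x ∈ D.PhiPos₁ ∧ D.refl₁ x ∈ D.SW W' }

/-- `Δ₂(W') = {y ∈ Φ₂⁺ : r_y ∈ S(W')}`. -/
noncomputable def Delta₂ (W' : Subgroup W) : Set V₂ :=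
  { y | y ∈ D.PhiPos₂ ∧ D.refl₂ y ∈ D.SW W' }

/-- The length function `ℓ_{W'}` of a reflection subgroup `W'` with respect to its
canonical generators `S(W')`. -/
noncomputable def lenIn (W' : Subgroup W) (w : W) : ℕ :=
  sInf { n | ∃ l : List W, l.length = n ∧ (∀ t ∈ l, t ∈ D.SW W') ∧ l.prod = w }

end CoxeterDatum

/-!
A simple reflection `r_s` permutes the positive roots other than the multiples of `α_s`, and a
root that is a multiple of `α_s` has reflection `r_s`: the conditions (D2) force this on the
coefficients, and faithfulness identifies the reflections. Induction on a reduced word then gives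
the strong exchange condition in the form `r_z ∈ N̄(w) ↔ w z < 0` for `z > 0`.

Now let `r_s ∉ W'` and `t ∈ S(W')`. If `r_s r_z r_s ∈ N̄(r_s t r_s)` with `r_z ∈ W'`, `z > 0`, then
`r_s z > 0` and `r_s t z < 0`; were `t z > 0`, its reflection `t r_z t` would be `r_s ∈ W'`.
So `t z < 0`, i.e. `r_z ∈ N̄(t) ∩ W' = {t}`. Hence `r_s S(W') r_s ⊆ S(r_s W' r_s)`, and on roots
`r_s Δ(W') ⊆ Δ(r_s W' r_s)`; applying this to `r_s W' r_s` gives the reverse inclusion.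
Exchanging the roles of `V₁` and `V₂` gives the second half.
-/

section PLC

variable {V : Type*} [AddCommGroup V] [Module ℝ V] {A : Set V}

theorem PLC.smul {a : V} {c : ℝ} (hc : 0 < c) (ha : a ∈ PLC A) : c • a ∈ PLC A := by
  obtain ⟨f, hf0, hfA, hf, rfl⟩ := ha
  refine ⟨c • f, fun x => mul_nonneg hc.le (hf0 x), ?_, smul_ne_zero hc.ne' hf, ?_⟩
  · rwa [Finsupp.support_smul_eq hc.ne']
  · rw [Finsupp.sum_smul_index (fun x => zero_smul ℝ x), Finsupp.smul_sum]
    exact Finsupp.sum_congr fun x _ => (mul_smul c (f x) x).symm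

theorem support_subset_singleton_of_sum_eq_smul {a : V} (h0 : (0 : V) ∉ PLC A)
    (ha : a ∉ PLC (A \ {a})) (haA : a ∈ A) {c : V →₀ ℝ} (hc0 : ∀ b, 0 ≤ c b)
    (hcA : ↑c.support ⊆ A) {m : ℝ} (hsum : (c.sum fun b t => t • b) = m • a) :
    c.support ⊆ {a} := by
  classical
  by_contra hsupp
  obtain ⟨b, hb, hba⟩ := Finset.not_subset.1 hsupp
  rw [Finset.mem_singleton] at hba
  set g := c.erase a
  have hg0 : ∀ x, 0 ≤ g x := fun x => by
    rcases eq_or_ne x a with rfl | hx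
    · exact (Finsupp.erase_same (f := c)).ge
    · rw [Finsupp.erase_ne hx]; exact hc0 x
  have hgA : ↑g.support ⊆ A \ {a} := by
    rw [Finsupp.support_erase, Finset.coe_erase]; exact Set.sdiff_subset_sdiff_left hcA
  have hgb : g b ≠ 0 := by rw [Finsupp.erase_ne hba]; exact Finsupp.mem_support_iff.1 hb
  have hgsum : (g.sum fun b t => t • b) = (m - c a) • a := by
    have := Finsupp.add_sum_erase' c a (fun b t => t • b) (fun b => zero_smul ℝ b)
    rw [hsum] at this
    rw [sub_smul, ← this, add_sub_cancel_left]
  rcases le_or_gt (m - c a) 0 with hle | hlt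
  · refine h0 ⟨g + Finsupp.single a (-(m - c a)), fun x => ?_, ?_, ?_, ?_⟩
    · rcases eq_or_ne x a with rfl | hx
      · rw [Finsupp.add_apply, Finsupp.erase_same, Finsupp.single_eq_same]; linarith
      · rw [Finsupp.add_apply, Finsupp.single_eq_of_ne hx, add_zero]; exact hg0 x
    · refine (Finset.coe_subset.2 Finsupp.support_add).trans ?_
      rw [Finset.coe_union]
      exact Set.union_subset (hgA.trans Set.sdiff_subset)
        ((Finset.coe_subset.2 Finsupp.support_single_subset).trans (by simpa using haA))
    · intro h
      apply hgb
      simpa [Finsupp.single_eq_of_ne hba] using DFunLike.congr_fun h b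
    · rw [Finsupp.sum_add_index' (fun x => zero_smul ℝ x) (fun x t₁ t₂ => add_smul t₁ t₂ x),
        Finsupp.sum_single_index (zero_smul ℝ a), hgsum]
      module
  · have hg : g ≠ 0 := fun h => hgb (by rw [h]; rfl)
    have := PLC.smul (inv_pos.2 hlt) ⟨g, hg0, hgA, hg, hgsum.symm⟩
    rw [smul_smul, inv_mul_cancel₀ hlt.ne', one_smul] at this
    exact ha this

end PLC

namespace CoxeterDatum

variable {S V₁ V₂ W : Type*} [AddCommGroup V₁] [Module ℝ V₁]
  [AddCommGroup V₂] [Module ℝ V₂] [Group W]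

variable (D : CoxeterDatum S V₁ V₂ W)

theorem rho₁_mul_apply (u v : W) (x : V₁) : D.ρ₁ (u * v) x = D.ρ₁ u (D.ρ₁ v x) := by
  rw [map_mul, Module.End.mul_apply]

theorem rho₂_mul_apply (u v : W) (y : V₂) : D.ρ₂ (u * v) y = D.ρ₂ u (D.ρ₂ v y) := by
  rw [map_mul, Module.End.mul_apply]

theorem rho₁_one_apply (x : V₁) : D.ρ₁ 1 x = x := by rw [map_one, Module.End.one_apply]

theorem rho₂_one_apply (y : V₂) : D.ρ₂ 1 y = y := by rw [map_one, Module.End.one_apply]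

theorem r_inv (s : S) : (D.r s)⁻¹ = D.r s := inv_eq_of_mul_eq_one_left (D.r_sq s)

theorem r_mul_r_mul_mul_r_mul_r (s : S) (g : W) : D.r s * (D.r s * g * D.r s) * D.r s = g := by
  simp only [← mul_assoc, D.r_sq, one_mul]
  rw [mul_assoc, D.r_sq, mul_one]

theorem rho₁_r_rho₁_r (s : S) (x : V₁) : D.ρ₁ (D.r s) (D.ρ₁ (D.r s) x) = x := by
  rw [← D.rho₁_mul_apply, D.r_sq, D.rho₁_one_apply]

theorem r_mul_mul_r_mem_T (s : S) {t : W} (ht : t ∈ D.T) : D.r s * t * D.r s ∈ D.T := by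
  obtain ⟨u, p, rfl⟩ := ht
  exact ⟨D.r s * u, p, by rw [mul_inv_rev, D.r_inv]; group⟩

theorem alpha_mem_Phi₁ (s : S) : D.α s ∈ D.Phi₁ := ⟨1, s, (D.rho₁_one_apply _).symm⟩

theorem beta_mem_Phi₂ (s : S) : D.β s ∈ D.Phi₂ := ⟨1, s, (D.rho₂_one_apply _).symm⟩

theorem rho₁_mem_Phi₁ {x : V₁} (hx : x ∈ D.Phi₁) (w : W) : D.ρ₁ w x ∈ D.Phi₁ := by
  obtain ⟨u, s, rfl⟩ := hx
  exact ⟨w * u, s, (D.rho₁_mul_apply _ _ _).symm⟩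

theorem rho₂_mem_Phi₂ {y : V₂} (hy : y ∈ D.Phi₂) (w : W) : D.ρ₂ w y ∈ D.Phi₂ := by
  obtain ⟨u, s, rfl⟩ := hy
  exact ⟨w * u, s, (D.rho₂_mul_apply _ _ _).symm⟩

theorem rho₁_r_alpha (s : S) : D.ρ₁ (D.r s) (D.α s) = -D.α s := by
  rw [D.hr₁, D.D1]
  module

theorem mem_PhiPos₁_or_mem_PhiNeg₁ {x : V₁} (hx : x ∈ D.Phi₁) :
    x ∈ D.PhiPos₁ ∨ x ∈ D.PhiNeg₁ :=
  D.decomp₁.subset hx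

theorem notMem_PhiNeg₁_of_mem_PhiPos₁ {x : V₁} (hx : x ∈ D.PhiPos₁) : x ∉ D.PhiNeg₁ :=
  Set.disjoint_left.1 D.disj₁ hx

theorem ne_zero_of_mem_Phi₁ {x : V₁} (hx : x ∈ D.Phi₁) : x ≠ 0 := by
  rintro rfl
  rcases D.mem_PhiPos₁_or_mem_PhiNeg₁ hx with h | h
  · exact D.D2a h.2
  · exact D.D2a (neg_zero (G := V₁) ▸ h.2)

theorem refl₁_rho (w : W) {x : V₁} (hx : x ∈ D.Phi₁) :
    D.refl₁ (D.ρ₁ w x) = w * D.refl₁ x * w⁻¹ := by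
  obtain ⟨u, s, rfl⟩ := hx
  rw [← D.rho₁_mul_apply, D.refl₁_eq, D.refl₁_eq]
  group

theorem refl₁_alpha (s : S) : D.refl₁ (D.α s) = D.r s := by
  simpa [D.rho₁_one_apply] using D.refl₁_eq 1 s

theorem refl₁_mem_T {x : V₁} (hx : x ∈ D.Phi₁) : D.refl₁ x ∈ D.T := by
  obtain ⟨u, p, rfl⟩ := hx
  exact ⟨u, p, D.refl₁_eq u p⟩

theorem refl₁_mul_self {x : V₁} (hx : x ∈ D.Phi₁) : D.refl₁ x * D.refl₁ x = 1 := by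
  obtain ⟨u, s, rfl⟩ := hx
  rw [D.refl₁_eq, show u * D.r s * u⁻¹ * (u * D.r s * u⁻¹) = u * (D.r s * D.r s) * u⁻¹ by group,
    D.r_sq, mul_one, mul_inv_cancel]

theorem refl₁_apply_self {x : V₁} (hx : x ∈ D.Phi₁) : D.ρ₁ (D.refl₁ x) x = -x := by
  obtain ⟨u, s, rfl⟩ := hx
  rw [D.refl₁_eq, ← D.rho₁_mul_apply, inv_mul_cancel_right, D.rho₁_mul_apply, D.rho₁_r_alpha,
    map_neg]

theorem exists_PhiPos₁_refl₁_eq {t : W} (ht : t ∈ D.T) : ∃ z ∈ D.PhiPos₁, D.refl₁ z = t := by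
  obtain ⟨u, p, rfl⟩ := ht
  rcases D.mem_PhiPos₁_or_mem_PhiNeg₁ ⟨u, p, rfl⟩ with hpos | hneg
  · exact ⟨_, hpos, D.refl₁_eq u p⟩
  · refine ⟨_, hneg, ?_⟩
    rw [← map_neg, ← D.rho₁_r_alpha, ← D.rho₁_mul_apply, D.refl₁_eq, mul_inv_rev, D.r_inv,
      mul_assoc u, D.r_sq, mul_one, mul_assoc]

theorem pair_phi_self {x : V₁} (hx : x ∈ D.Phi₁) : D.pair x (D.phi x) = 1 := by
  have h : (2 - 2 * D.pair x (D.phi x)) • x = 0 := by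
    have := D.refl₁_act x hx x
    rw [D.refl₁_apply_self hx] at this
    linear_combination (norm := module) -this
  have := (smul_eq_zero.1 h).resolve_right (D.ne_zero_of_mem_Phi₁ hx)
  linarith

theorem phiInv_beta (s : S) : D.phiInv (D.β s) = D.α s := by
  rw [← D.phi_simple, D.phiInv_phi _ (D.alpha_mem_Phi₁ s)]

theorem phiInv_rho (w : W) {y : V₂} (hy : y ∈ D.Phi₂) :
    D.phiInv (D.ρ₂ w y) = D.ρ₁ w (D.phiInv y) := by
  have h : D.phi (D.ρ₁ w (D.phiInv y)) = D.ρ₂ w y := by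
    rw [D.phi_equiv w _ (D.phiInv_mem y hy), D.phi_phiInv y hy]
  rw [← h, D.phiInv_phi _ (D.rho₁_mem_Phi₁ (D.phiInv_mem y hy) w)]

theorem rho₂_refl₁ {x : V₁} (hx : x ∈ D.Phi₁) (y : V₂) :
    D.ρ₂ (D.refl₁ x) y = y - (2 * D.pair x y) • D.phi x := by
  obtain ⟨u, t, rfl⟩ := hx
  have hphi : D.phi (D.ρ₁ u (D.α t)) = D.ρ₂ u (D.β t) := by
    rw [D.phi_equiv u _ (D.alpha_mem_Phi₁ t), D.phi_simple]
  have hrefl : D.refl₂ (D.phi (D.ρ₁ u (D.α t))) = D.refl₁ (D.ρ₁ u (D.α t)) := by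
    rw [hphi, D.refl₂_eq, D.refl₁_eq]
  have := D.refl₂_act _ (hphi ▸ D.rho₂_mem_Phi₂ (D.beta_mem_Phi₂ t) u) y
  rwa [hrefl, D.phiInv_phi _ ⟨u, t, rfl⟩] at this

/-- A root on the line of `α_p` has reflection `r_p`: `r_x r_p` fixes `α_p`, hence by
equivariance of `φ` also `β_p`, which forces `c φ(x) = β_p` and then `r_x r_p = 1`. -/
theorem refl₁_eq_r_of_eq_smul {x : V₁} (hx : x ∈ D.Phi₁) {c : ℝ} {p : S}
    (hxc : x = c • D.α p) : D.refl₁ x = D.r p := by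
  obtain ⟨y, hy⟩ : ∃ y, D.phi x = y := ⟨_, rfl⟩
  have hcp : c * D.pair (D.α p) y = 1 := by
    have := D.pair_phi_self hx
    rwa [hy, hxc, map_smul, LinearMap.smul_apply, smul_eq_mul] at this
  have hu : ∀ v, D.ρ₁ (D.refl₁ x * D.r p) v =
      v + (2 * D.pair v (D.β p) - 2 * c * D.pair v y) • D.α p := by
    intro v
    rw [D.rho₁_mul_apply, D.hr₁, D.refl₁_act x hx, hy, hxc]
    simp only [map_sub, map_smul, LinearMap.sub_apply, LinearMap.smul_apply, smul_eq_mul]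
    match_scalars
    · rfl
    · linear_combination (4 * D.pair v (D.β p)) * hcp
  have hu_alpha : D.ρ₁ (D.refl₁ x * D.r p) (D.α p) = D.α p := by
    rw [hu, D.D1, show (2 * 1 - 2 * c * D.pair (D.α p) y : ℝ) = 0 by
      linear_combination (-2 : ℝ) * hcp, zero_smul, add_zero]
  have hu_beta : D.ρ₂ (D.refl₁ x * D.r p) (D.β p) = D.β p := by
    rw [← D.phi_simple, ← D.phi_equiv _ _ (D.alpha_mem_Phi₁ p), hu_alpha]
  have hcy : c • y = D.β p := by
    rw [D.rho₂_mul_apply, D.hr₂, D.rho₂_refl₁ hx, hy, hxc] at hu_beta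
    simp only [map_sub, map_smul, LinearMap.smul_apply, smul_eq_mul, D.D1] at hu_beta
    apply smul_right_injective V₂ (two_ne_zero (α := ℝ))
    linear_combination (norm := module) hu_beta
  have hρ : D.ρ₁ (D.refl₁ x * D.r p) = 1 := LinearMap.ext fun v => by
    rw [hu, Module.End.one_apply, ← hcy, map_smul, smul_eq_mul, mul_assoc, sub_self, zero_smul,
      add_zero]
  have h1 : D.refl₁ x * D.r p = 1 := D.ρ₁_inj (hρ.trans (map_one _).symm)
  rw [← D.r_inv, ← mul_eq_one_iff_eq_inv, h1]

theorem refl₁_eq_r_of_rho_r_mem_PhiNeg₁ {z : V₁} (hz : z ∈ D.PhiPos₁) {s : S}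
    (hneg : D.ρ₁ (D.r s) z ∈ D.PhiNeg₁) : D.refl₁ z = D.r s := by
  obtain ⟨hzΦ, c, hc0, hcA, -, hzc⟩ := hz
  obtain ⟨-, d, hd0, hdA, -, hzd⟩ := hneg
  have hsum : ((c + d).sum fun b t => t • b) = (2 * D.pair z (D.β s)) • D.α s := by
    rw [Finsupp.sum_add_index' (fun x => zero_smul ℝ x) (fun x t₁ t₂ => add_smul t₁ t₂ x), ← hzc,
      ← hzd, D.hr₁]
    module
  classical
  have hcd := support_subset_singleton_of_sum_eq_smul D.D2a (D.D2c s) ⟨s, rfl⟩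
    (fun b => add_nonneg (hc0 b) (hd0 b))
    ((Finset.coe_subset.2 Finsupp.support_add).trans (by simpa using Set.union_subset hcA hdA))
    hsum
  have hc : c.support ⊆ {D.α s} := fun b hb => hcd <| Finsupp.mem_support_iff.2
    (add_pos_of_pos_of_nonneg ((hc0 b).lt_of_ne' (Finsupp.mem_support_iff.1 hb)) (hd0 b)).ne'
  obtain ⟨b, rfl⟩ := Finsupp.support_subset_singleton'.1 hc
  exact D.refl₁_eq_r_of_eq_smul hzΦ (hzc.trans (Finsupp.sum_single_index (zero_smul ℝ _)))

theorem rho_r_mem_PhiPos₁ {z : V₁} (hz : z ∈ D.PhiPos₁) {s : S} (h : D.refl₁ z ≠ D.r s) :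
    D.ρ₁ (D.r s) z ∈ D.PhiPos₁ :=
  (D.mem_PhiPos₁_or_mem_PhiNeg₁ (D.rho₁_mem_Phi₁ hz.1 _)).resolve_right
    (mt (D.refl₁_eq_r_of_rho_r_mem_PhiNeg₁ hz) h)

theorem exists_word (w : W) : ∃ l : List S, (l.map D.r).prod = w := by
  have hw : w ∈ Subgroup.closure (Set.range D.r) := D.r_gen ▸ Subgroup.mem_top w
  induction hw using Subgroup.closure_induction_left with
  | one => exact ⟨[], rfl⟩
  | mul_left _ hx _ _ ih =>
    obtain ⟨⟨s, rfl⟩, l, rfl⟩ := And.intro hx ih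
    exact ⟨s :: l, rfl⟩
  | inv_mul_cancel _ hx _ _ ih =>
    obtain ⟨⟨s, rfl⟩, l, rfl⟩ := And.intro hx ih
    exact ⟨s :: l, by rw [D.r_inv]; rfl⟩

theorem exists_word_length_eq_len (w : W) :
    ∃ l : List S, l.length = D.len w ∧ (l.map D.r).prod = w :=
  Nat.sInf_mem (s := { n | ∃ l : List S, l.length = n ∧ (l.map D.r).prod = w })
    (let ⟨l, hl⟩ := D.exists_word w; ⟨l.length, l, rfl, hl⟩)

theorem len_le_length {l : List S} : D.len (l.map D.r).prod ≤ l.length :=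
  Nat.sInf_le ⟨l, rfl, rfl⟩

/-- The deleted letter is the one at which `z` changes sign. -/
theorem exists_shorter_word {z : V₁} (hz : z ∈ D.PhiPos₁) (l : List S)
    (hneg : D.ρ₁ (l.map D.r).prod z ∈ D.PhiNeg₁) :
    ∃ l' : List S, l'.length < l.length ∧ (l'.map D.r).prod = (l.map D.r).prod * D.refl₁ z := by
  induction l with
  | nil =>
    rw [List.map_nil, List.prod_nil, D.rho₁_one_apply] at hneg
    exact absurd hneg (D.notMem_PhiNeg₁_of_mem_PhiPos₁ hz)
  | cons s l ih =>
    rw [List.map_cons, List.prod_cons, D.rho₁_mul_apply] at hneg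
    rcases D.mem_PhiPos₁_or_mem_PhiNeg₁ (D.rho₁_mem_Phi₁ hz.1 (l.map D.r).prod) with hpos | hneg'
    · have h := D.refl₁_eq_r_of_rho_r_mem_PhiNeg₁ hpos hneg
      rw [D.refl₁_rho _ hz.1] at h
      refine ⟨l, Nat.lt_succ_self _, ?_⟩
      rw [List.map_cons, List.prod_cons, ← h, inv_mul_cancel_right, mul_assoc,
        D.refl₁_mul_self hz.1, mul_one]
    · obtain ⟨l', hlen, hl'⟩ := ih hneg'
      exact ⟨s :: l', Nat.succ_lt_succ hlen, by simp only [List.map_cons, List.prod_cons, hl',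
        mul_assoc]⟩

theorem len_mul_refl₁_lt {z : V₁} (hz : z ∈ D.PhiPos₁) {w : W}
    (hneg : D.ρ₁ w z ∈ D.PhiNeg₁) : D.len (w * D.refl₁ z) < D.len w := by
  obtain ⟨l, hlen, rfl⟩ := D.exists_word_length_eq_len w
  obtain ⟨l', hl', hprod⟩ := D.exists_shorter_word hz l hneg
  exact hlen ▸ hprod ▸ D.len_le_length.trans_lt hl'

theorem refl₁_mem_Nbar_iff {z : V₁} (hz : z ∈ D.PhiPos₁) {w : W} :
    D.refl₁ z ∈ D.Nbar w ↔ D.ρ₁ w z ∈ D.PhiNeg₁ := by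
  refine ⟨fun ⟨_, hlt⟩ => ?_, fun hneg => ⟨D.refl₁_mem_T hz.1, D.len_mul_refl₁_lt hz hneg⟩⟩
  by_contra hnotneg
  have hpos := (D.mem_PhiPos₁_or_mem_PhiNeg₁ (D.rho₁_mem_Phi₁ hz.1 w)).resolve_right hnotneg
  have hneg : D.ρ₁ (w * D.refl₁ z) z ∈ D.PhiNeg₁ := by
    rw [D.rho₁_mul_apply, D.refl₁_apply_self hz.1, map_neg]
    exact Set.neg_mem_neg.2 hpos
  have := D.len_mul_refl₁_lt hz hneg
  rw [mul_assoc, D.refl₁_mul_self hz.1, mul_one] at this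
  omega

theorem mem_Nbar_self {t : W} (ht : t ∈ D.T) : t ∈ D.Nbar t := by
  obtain ⟨z, hz, rfl⟩ := D.exists_PhiPos₁_refl₁_eq ht
  rw [D.refl₁_mem_Nbar_iff hz, D.refl₁_apply_self hz.1]
  exact Set.neg_mem_neg.2 hz

theorem mem_of_mem_SW {W' : Subgroup W} {t : W} (ht : t ∈ D.SW W') : t ∈ W' := by
  have : t ∈ D.Nbar t ∩ (W' : Set W) := by rw [ht.2]; rfl
  exact this.2

theorem mem_map_conj_r {W' : Subgroup W} {s : S} {g : W} :
    g ∈ W'.map (MulAut.conj (D.r s)).toMonoidHom ↔ D.r s * g * D.r s ∈ W' := by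
  rw [Subgroup.mem_map_equiv, MulAut.conj_symm_apply, D.r_inv]

theorem conj_mem_SW {W' : Subgroup W} {s : S} (hs : D.r s ∉ W') {t : W} (ht : t ∈ D.SW W') :
    D.r s * t * D.r s ∈ D.SW (W'.map (MulAut.conj (D.r s)).toMonoidHom) := by
  have htW' := D.mem_of_mem_SW ht
  have hT : D.r s * t * D.r s ∈ D.T := D.r_mul_mul_r_mem_T s ht.1
  refine ⟨hT, Set.eq_singleton_iff_unique_mem.2 ⟨⟨D.mem_Nbar_self hT, ?_⟩, ?_⟩⟩
  · rwa [SetLike.mem_coe, D.mem_map_conj_r, D.r_mul_r_mul_mul_r_mul_r]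
  rintro u' ⟨hu'N, hu'W⟩
  rw [SetLike.mem_coe, D.mem_map_conj_r] at hu'W
  obtain ⟨z, hz, hzu⟩ :=
    D.exists_PhiPos₁_refl₁_eq (D.r_mul_mul_r_mem_T s hu'N.1)
  have hsz : D.ρ₁ (D.r s) z ∈ D.PhiPos₁ :=
    D.rho_r_mem_PhiPos₁ hz fun h => hs (h ▸ hzu ▸ hu'W)
  have hrefl : D.refl₁ (D.ρ₁ (D.r s) z) = u' := by
    rw [D.refl₁_rho _ hz.1, hzu, D.r_inv, D.r_mul_r_mul_mul_r_mul_r]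
  have hstz : D.ρ₁ (D.r s) (D.ρ₁ t z) ∈ D.PhiNeg₁ := by
    have := (D.refl₁_mem_Nbar_iff hsz).1 (hrefl ▸ hu'N)
    rwa [← D.rho₁_mul_apply, mul_assoc, D.r_sq, mul_one, D.rho₁_mul_apply] at this
  have htz : D.ρ₁ t z ∈ D.PhiNeg₁ := by
    refine (D.mem_PhiPos₁_or_mem_PhiNeg₁ (D.rho₁_mem_Phi₁ hz.1 t)).resolve_left fun hpos => hs ?_
    rw [← D.refl₁_eq_r_of_rho_r_mem_PhiNeg₁ hpos hstz, D.refl₁_rho _ hz.1, hzu]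
    exact mul_mem (mul_mem htW' hu'W) (inv_mem htW')
  have hut : D.r s * u' * D.r s ∈ D.Nbar t ∩ (W' : Set W) :=
    ⟨hzu ▸ (D.refl₁_mem_Nbar_iff hz).2 htz, hu'W⟩
  rw [ht.2, Set.mem_singleton_iff] at hut
  rw [← hut, D.r_mul_r_mul_mul_r_mul_r]

theorem image_Delta₁_subset {W' : Subgroup W} {s : S} (hs : D.r s ∉ W') :
    D.ρ₁ (D.r s) '' D.Delta₁ W' ⊆ D.Delta₁ (W'.map (MulAut.conj (D.r s)).toMonoidHom) := by
  rintro _ ⟨z, ⟨hz, hzS⟩, rfl⟩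
  refine ⟨D.rho_r_mem_PhiPos₁ hz fun h => hs (h ▸ D.mem_of_mem_SW hzS), ?_⟩
  rw [D.refl₁_rho _ hz.1, D.r_inv]
  exact D.conj_mem_SW hs hzS

theorem Delta₁_map_conj_r {W' : Subgroup W} {s : S} (hs : D.r s ∉ W') :
    D.Delta₁ (W'.map (MulAut.conj (D.r s)).toMonoidHom) = D.ρ₁ (D.r s) '' D.Delta₁ W' := by
  have hs' : D.r s ∉ W'.map (MulAut.conj (D.r s)).toMonoidHom := by
    rwa [D.mem_map_conj_r, D.r_sq, one_mul]
  have hback : (W'.map (MulAut.conj (D.r s)).toMonoidHom).map (MulAut.conj (D.r s)).toMonoidHom =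
      W' := by
    ext g
    rw [D.mem_map_conj_r, D.mem_map_conj_r, D.r_mul_r_mul_mul_r_mul_r]
  refine subset_antisymm (fun v hv => ⟨D.ρ₁ (D.r s) v, ?_, D.rho₁_r_rho₁_r s v⟩)
    (D.image_Delta₁_subset hs)
  simpa only [hback] using D.image_Delta₁_subset hs' ⟨v, hv, rfl⟩

theorem Delta₁_map_conj_refl₁ (W' : Subgroup W) :
    ∀ x ∈ Set.range D.α, x ∉ D.PhiSub₁ W' →
      D.Delta₁ (Subgroup.map (MulAut.conj (D.refl₁ x)).toMonoidHom W') =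
        D.ρ₁ (D.refl₁ x) '' D.Delta₁ W' := by
  rintro _ ⟨s, rfl⟩ hs
  rw [D.refl₁_alpha]
  exact D.Delta₁_map_conj_r fun h => hs ⟨D.alpha_mem_Phi₁ s, (D.refl₁_alpha s).symm ▸ h⟩

def dual : CoxeterDatum S V₂ V₁ W where
  pair := D.pair.flip
  α := D.β
  β := D.α
  α_inj := D.β_inj
  β_inj := D.α_inj
  D1 := D.D1
  D2a := D.D2b
  D2b := D.D2a
  D2c := D.D2d
  D2d := D.D2c
  D3 := fun s t h => D.D3 t s (Ne.symm h)
  D4 := fun s t h => D.D4 t s h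
  D5 := fun s t h => by simpa only [LinearMap.flip_apply, mul_comm] using D.D5 t s (Ne.symm h)
  r := D.r
  r_gen := D.r_gen
  r_ne_one := D.r_ne_one
  r_sq := D.r_sq
  ρ₁ := D.ρ₂
  ρ₂ := D.ρ₁
  ρ₁_inj := D.ρ₂_inj
  ρ₂_inj := D.ρ₁_inj
  hr₁ := D.hr₂
  hr₂ := D.hr₁
  pair_inv := fun w y x => D.pair_inv w x y
  phi := D.phiInv
  phiInv := D.phi
  refl₁ := D.refl₂
  refl₂ := D.refl₁
  decomp₁ := D.decomp₂
  disj₁ := D.disj₂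
  decomp₂ := D.decomp₁
  disj₂ := D.disj₁
  phi_mem := D.phiInv_mem
  phiInv_mem := D.phi_mem
  phiInv_phi := D.phi_phiInv
  phi_phiInv := D.phiInv_phi
  phi_simple := D.phiInv_beta
  phi_equiv := fun w _ hy => D.phiInv_rho w hy
  refl₁_eq := D.refl₂_eq
  refl₂_eq := D.refl₁_eq
  refl₁_act := D.refl₂_act
  refl₂_act := D.refl₁_act

end CoxeterDatum

theorem stmt13_general {S V₁ V₂ W : Type*} [AddCommGroup V₁] [Module ℝ V₁]
    [AddCommGroup V₂] [Module ℝ V₂] [Group W]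
    (D : CoxeterDatum S V₁ V₂ W)
    (W' : Subgroup W) :
    (∀ x ∈ Set.range D.α, x ∉ D.PhiSub₁ W' →
      D.Delta₁ (Subgroup.map (MulAut.conj (D.refl₁ x)).toMonoidHom W') =
        D.ρ₁ (D.refl₁ x) '' D.Delta₁ W') ∧
    (∀ y ∈ Set.range D.β, y ∉ D.PhiSub₂ W' →
      D.Delta₂ (Subgroup.map (MulAut.conj (D.refl₂ y)).toMonoidHom W') =
        D.ρ₂ (D.refl₂ y) '' D.Delta₂ W') :=
  ⟨D.Delta₁_map_conj_refl₁ W', D.dual.Delta₁_map_conj_refl₁ W'⟩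

/-- Let `W'` be a reflection subgroup, `i ∈ {1,2}`, and let
`x ∈ Πᵢ \ Φᵢ(W')` be a simple root whose reflection does not lie in `W'`.  Then
`Δᵢ(r_x W' r_x) = r_x · Δᵢ(W')` (here `r_x W' r_x = r_x W' r_x⁻¹` since `r_x` is an
involution). -/
theorem stmt13 {S V₁ V₂ W : Type*} [AddCommGroup V₁] [Module ℝ V₁]
    [AddCommGroup V₂] [Module ℝ V₂] [Group W]
    (D : CoxeterDatum S V₁ V₂ W)
    (W' : Subgroup W) (hW' : D.IsReflectionSubgroup W') :
    (∀ x ∈ Set.range D.α, x ∉ D.PhiSub₁ W' →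
      D.Delta₁ (Subgroup.map (MulAut.conj (D.refl₁ x)).toMonoidHom W') =
        D.ρ₁ (D.refl₁ x) '' D.Delta₁ W') ∧
    (∀ y ∈ Set.range D.β, y ∉ D.PhiSub₂ W' →
      D.Delta₂ (Subgroup.map (MulAut.conj (D.refl₂ y)).toMonoidHom W') =
        D.ρ₂ (D.refl₂ y) '' D.Delta₂ W') :=
  stmt13_general D W'
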